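/- Let R be a graded ring in non-negative degrees, M a graded module bounded below, N a submodule generated by elements {x_i}_{i∈I}. Suppose there exists δ ≥ 0 such that every y ∈ N admits an expression y = Σ a_i x_i with deg(a_i) + deg(x_i) ≤ deg(y) + δ for all i. Then Buchberger's algorithm applied to {x_i} (repeatedly adjoining the elements z_j built from homogeneous generating syzygies of the initial terms) terminates after at most δ steps with a Gröbner basis of N. -/

import Mathlib

open DirectSum

section Defs

variable {A : Type*} [CommRing A] (𝒜 : ℤ → AddSubgroup A) [GradedRing 𝒜]
variable {M : Type*} [AddCommGroup M] [Module A M] (ℳ : ℤ → AddSubgroup M)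
  [DirectSum.Decomposition ℳ]

/-- The degree of an element of a graded object: the largest `n` whose homogeneous
component is nonzero (junk value for `x = 0`). -/
noncomputable def mdeg {σ M : Type*} [AddCommMonoid M] [SetLike σ M] [AddSubmonoidClass σ M]
    (ℳ : ℤ → σ) [DirectSum.Decomposition ℳ] (x : M) : ℤ :=
  sSup {n : ℤ | (DirectSum.decompose ℳ x n : M) ≠ 0}

/-- The initial (top-degree) term of an element. -/
noncomputable def ini {σ M : Type*} [AddCommMonoid M] [SetLike σ M] [AddSubmonoidClass σ M]
    (ℳ : ℤ → σ) [DirectSum.Decomposition ℳ] (x : M) : M :=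
  (DirectSum.decompose ℳ x (mdeg ℳ x) : M)

/-- The initial submodule of a submodule `N`: generated by initial terms of nonzero
elements of `N`. -/
def iniSub (N : Submodule A M) : Submodule A M :=
  Submodule.span A {m : M | ∃ x ∈ N, x ≠ 0 ∧ ini ℳ x = m}

/-- The ring grading is supported in non-negative degrees. -/
def RingNonnegGraded : Prop := ∀ n < (0 : ℤ), ∀ a ∈ 𝒜 n, a = (0 : A)

/-- The module grading is bounded below. -/
def ModuleBddBelow : Prop := ∃ n₀ : ℤ, ∀ n < n₀, ∀ m ∈ ℳ n, m = (0 : M)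

/-- A family of elements of `N` is a Gröbner basis for `N`. -/
def IsGrobnerBasis {I : Type*} (N : Submodule A M) (x : I → M) : Prop :=
  (∀ i, x i ∈ N) ∧
    Submodule.span A (Set.range fun i => ini ℳ (x i)) = iniSub ℳ N

/-- `a` gives a reduced expression `y = ∑ aᵢ xᵢ` with `deg aᵢ + deg xᵢ ≤ deg y`. -/
def IsReducedExpr {I : Type*} (x : I → M) (y : M) (a : I →₀ A) : Prop :=
  y = a.sum (fun i c => c • x i) ∧
    ∀ i ∈ a.support, mdeg 𝒜 (a i) + mdeg ℳ (x i) ≤ mdeg ℳ y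

/-- Set version of a Gröbner basis. -/
def IsGrobnerBasisSet (N : Submodule A M) (s : Set M) : Prop :=
  s ⊆ (N : Set M) ∧ Submodule.span A (ini ℳ '' s) = iniSub ℳ N

/-- `y` has a reduced expression in terms of the elements of `s`. -/
def HasReducedExprSet (s : Set M) (y : M) : Prop :=
  ∃ a : M →₀ A, ↑a.support ⊆ s ∧ y = a.sum (fun m c => c • m) ∧
    ∀ m ∈ a.support, mdeg 𝒜 (a m) + mdeg ℳ m ≤ mdeg ℳ y

/-- A submodule is homogeneous when it contains all homogeneous components of its
elements. -/
def IsHomogSubmodule (N : Submodule A M) : Prop :=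
  ∀ x ∈ N, ∀ n : ℤ, (DirectSum.decompose ℳ x n : M) ∈ N

/-- Graded-coherent: finitely generated, and every finitely generated homogeneous
submodule is finitely presented. -/
def GradedCoherent : Prop :=
  Module.Finite A M ∧ ∀ N : Submodule A M, N.FG → IsHomogSubmodule ℳ N →
    Module.FinitePresentation A N

/-- Gröbner-coherent: graded-coherent, and every finitely generated (possibly
inhomogeneous) submodule admits a finite Gröbner basis. -/
def GrobnerCoherent : Prop :=
  GradedCoherent (A := A) ℳ ∧ ∀ N : Submodule A M, N.FG →
    ∃ s : Finset M, IsGrobnerBasisSet ℳ N ↑s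

/-- A homogeneous generating family of syzygies of the initial terms of the `x i`
(with the free module graded by `deg eᵢ = deg xᵢ`). -/
def IsHomogSyzygyGens {I J : Type*} (x : I → M) (c : J → I →₀ A) : Prop :=
  (∀ j, ∃ d : ℤ, ∀ i, c j i ∈ 𝒜 (d - mdeg ℳ (x i))) ∧
    Submodule.span A (Set.range c) =
      LinearMap.ker (Finsupp.linearCombination A fun i => ini ℳ (x i))

/-- Set version of a homogeneous generating set of syzygies of initial terms. -/
def IsHomogSyzygyGensSet (X : Set M) (C : Set (M →₀ A)) : Prop :=
  (∀ c ∈ C, ↑c.support ⊆ X) ∧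
  (∀ c ∈ C, ∃ d : ℤ, ∀ m : M, c m ∈ 𝒜 (d - mdeg ℳ m)) ∧
  Submodule.span A C =
    Finsupp.supported A A X ⊓
      LinearMap.ker (Finsupp.linearCombination A fun m : M => ini ℳ m)

/-- The elements `z = ∑ c m • m` attached to a set of syzygies `C`. -/
def zElems (C : Set (M →₀ A)) : Set M :=
  (fun c : M →₀ A => c.sum fun m coeff => coeff • m) '' C

/-- One step of Buchberger's algorithm: adjoin the `z`-elements of a homogeneous
generating set of syzygies. -/
def BuchbergerStep (X Y : Set M) : Prop :=
  ∃ C : Set (M →₀ A), IsHomogSyzygyGensSet 𝒜 ℳ X C ∧ Y = X ∪ zElems C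

end Defs

/-!
Measure an expression `y = ∑ aₘ • m` by `D = max (deg aₘ + deg m) ≥ deg y`. If `D > deg y`, the
degree-`D` parts of the coefficients form a homogeneous syzygy of the initial terms, hence a
combination `∑ gₜ • t` of the generating syzygies `t ∈ C` with homogeneous `gₜ`. Trading
`∑ (aₘ)_D • m` for `∑ gₜ • zₜ`, where `deg zₜ < deg t`, gives an expression over `X ∪ {zₜ}` with
`D` lowered by one. After `δ` steps every `y ∈ N` has a reduced expression over `X δ`, and the
top-degree component of a reduced expression exhibits `ini y` in the span of the initial terms.
-/

section Degree

variable {σ M : Type*} [AddCommMonoid M] [SetLike σ M] [AddSubmonoidClass σ M]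
  {ℳ : ℤ → σ} [DirectSum.Decomposition ℳ]

lemma finite_setOf_decompose_ne_zero (x : M) :
    {n : ℤ | (decompose ℳ x n : M) ≠ 0}.Finite := by
  classical
  refine (decompose ℳ x).support.finite_toSet.subset fun n hn => ?_
  simpa using hn

lemma le_mdeg {x : M} {n : ℤ} (h : (decompose ℳ x n : M) ≠ 0) : n ≤ mdeg ℳ x :=
  le_csSup (finite_setOf_decompose_ne_zero x).bddAbove h

lemma decompose_eq_zero_of_mdeg_lt {x : M} {n : ℤ} (h : mdeg ℳ x < n) :
    (decompose ℳ x n : M) = 0 :=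
  not_not.1 fun h' => (le_mdeg h').not_gt h

lemma decompose_mdeg_ne_zero {x : M} (hx : x ≠ 0) : (decompose ℳ x (mdeg ℳ x) : M) ≠ 0 := by
  refine Int.csSup_mem ?_ (finite_setOf_decompose_ne_zero x).bddAbove
  by_contra! h
  refine hx ((decompose ℳ).injective ?_)
  ext n
  simpa using Set.eq_empty_iff_forall_notMem.1 h n

lemma mdeg_le_of_forall {x : M} {n : ℤ} (hx : x ≠ 0)
    (h : ∀ p, n < p → (decompose ℳ x p : M) = 0) : mdeg ℳ x ≤ n :=
  not_lt.1 fun hn => decompose_mdeg_ne_zero hx (h _ hn)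

lemma ini_zero : ini ℳ (0 : M) = 0 := by
  simp [ini]

end Degree

section GradedSMul

variable {A : Type*} [CommRing A] {𝒜 : ℤ → AddSubgroup A} [GradedRing 𝒜]
variable {M : Type*} [AddCommGroup M] [Module A M] {ℳ : ℤ → AddSubgroup M}
  [DirectSum.Decomposition ℳ] [SetLike.GradedSMul 𝒜 ℳ]

omit [GradedRing 𝒜] in
lemma decompose_smul_of_mem {a : A} {p : ℤ} (ha : a ∈ 𝒜 p) (m : M) (n : ℤ) :
    (decompose ℳ (a • m) n : M) = a • (decompose ℳ m (n - p) : M) := by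
  classical
  conv_lhs => rw [← DirectSum.sum_support_decompose ℳ m]
  rw [Finset.smul_sum, decompose_sum, DFinsupp.finsetSum_apply, AddSubmonoidClass.coe_finsetSum]
  have hmem : ∀ q, a • (decompose ℳ m q : M) ∈ ℳ (p + q) := fun q =>
    vadd_eq_add p q ▸ SetLike.GradedSMul.smul_mem ha (SetLike.coe_mem _)
  rw [Finset.sum_eq_single (n - p) (fun q _ hq => decompose_of_mem_ne ℳ (hmem q) (by omega))
    (fun h => by simp [DFinsupp.notMem_support_iff.1 h])]
  exact decompose_of_mem_same ℳ (by simpa using hmem (n - p))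

omit [DirectSum.Decomposition ℳ] [SetLike.GradedSMul 𝒜 ℳ] in
lemma decompose_mul_of_mem_right {b : A} {q : ℤ} (hb : b ∈ 𝒜 q) (r : A) (n : ℤ) :
    (decompose 𝒜 (r * b) n : A) = (decompose 𝒜 r (n - q) : A) * b := by
  rw [mul_comm, mul_comm _ b]
  exact decompose_smul_of_mem hb r n

lemma decompose_smul_eq_smul_ini {a : A} {e : ℤ} (ha : ∀ p, e < p → (decompose 𝒜 a p : A) = 0)
    (m : M) {n : ℤ} (hn : e + mdeg ℳ m ≤ n) :
    (decompose ℳ (a • m) n : M) = (decompose 𝒜 a (n - mdeg ℳ m) : A) • ini ℳ m := by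
  classical
  conv_lhs => rw [← DirectSum.sum_support_decompose 𝒜 a]
  rw [Finset.sum_smul, decompose_sum, DFinsupp.finsetSum_apply, AddSubmonoidClass.coe_finsetSum,
    Finset.sum_congr rfl fun p _ => decompose_smul_of_mem (SetLike.coe_mem _) m n,
    Finset.sum_eq_single (n - mdeg ℳ m) (fun p _ hp => ?_)
    (fun h => by simp [DFinsupp.notMem_support_iff.1 h]), sub_sub_cancel, ini]
  rcases lt_or_ge e p with hep | hpe
  · simp [ha p hep]
  · rw [decompose_eq_zero_of_mdeg_lt (x := m) (by omega), smul_zero]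

end GradedSMul

section WeightedDegree

variable {A : Type*} [CommRing A] (𝒜 : ℤ → AddSubgroup A) [GradedRing 𝒜] {ι : Type*}

/-- The families with `mdeg 𝒜 (a i) + w i ≤ D` for all `i` in the support (see
`mem_weightedDegreeLE_iff`), phrased through homogeneous components so that they form a
subgroup. -/
def weightedDegreeLE (w : ι → ℤ) (D : ℤ) : AddSubgroup (ι →₀ A) where
  carrier := {a | ∀ i p, D < p + w i → (decompose 𝒜 (a i) p : A) = 0}
  zero_mem' := by simp
  add_mem' ha hb i p h := by simp [ha i p h, hb i p h]
  neg_mem' ha i p h := by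
    rw [Finsupp.neg_apply, ← GradedRing.proj_apply, map_neg, GradedRing.proj_apply, ha i p h,
      neg_zero]

/-- The component of weighted degree `D` of `a`, for the grading of `ι →₀ A` in which `a i`
has degree `deg (a i) + w i`. -/
noncomputable def weightedComponent (w : ι → ℤ) (D : ℤ) (a : ι →₀ A) : ι →₀ A :=
  Finsupp.onFinset a.support (fun i => (decompose 𝒜 (a i) (D - w i) : A)) fun i h => by
    contrapose! h
    simp [Finsupp.notMem_support_iff.1 h]

variable {𝒜} {w : ι → ℤ} {D : ℤ} {a : ι →₀ A}

@[simp]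
lemma weightedComponent_apply (i : ι) :
    weightedComponent 𝒜 w D a i = (decompose 𝒜 (a i) (D - w i) : A) :=
  rfl

lemma weightedComponent_mem (i : ι) : weightedComponent 𝒜 w D a i ∈ 𝒜 (D - w i) :=
  SetLike.coe_mem _

lemma support_weightedComponent_subset : (weightedComponent 𝒜 w D a).support ⊆ a.support :=
  Finsupp.support_onFinset_subset

lemma weightedComponent_mem_supported {s : Set ι} (ha : a ∈ Finsupp.supported A A s) :
    weightedComponent 𝒜 w D a ∈ Finsupp.supported A A s :=
  (Finsupp.mem_supported A _).2 <|
    (Finset.coe_subset.2 support_weightedComponent_subset).trans ((Finsupp.mem_supported A a).1 ha)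

lemma mem_weightedDegreeLE_iff :
    a ∈ weightedDegreeLE 𝒜 w D ↔ ∀ i ∈ a.support, mdeg 𝒜 (a i) + w i ≤ D := by
  refine ⟨fun ha i hi => ?_, fun ha i p hp => ?_⟩
  · by_contra! h
    exact decompose_mdeg_ne_zero (Finsupp.mem_support_iff.1 hi) (ha i _ h)
  · by_cases hi : i ∈ a.support
    · exact decompose_eq_zero_of_mdeg_lt (by linarith [ha i hi])
    · simp [Finsupp.notMem_support_iff.1 hi]

lemma mem_weightedDegreeLE_of_forall_mem (ha : ∀ i, a i ∈ 𝒜 (D - w i)) :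
    a ∈ weightedDegreeLE 𝒜 w D :=
  fun i _ hp => decompose_of_mem_ne 𝒜 (ha i) (by omega)

lemma weightedComponent_eq_self (ha : ∀ i, a i ∈ 𝒜 (D - w i)) :
    weightedComponent 𝒜 w D a = a :=
  Finsupp.ext fun i => decompose_of_mem_same 𝒜 (ha i)

lemma weightedComponent_eq_zero_of_lt (ha : a ∈ weightedDegreeLE 𝒜 w D) {n : ℤ} (hn : D < n) :
    weightedComponent 𝒜 w n a = 0 :=
  Finsupp.ext fun i => ha i _ (by omega)

lemma sub_weightedComponent_mem (ha : a ∈ weightedDegreeLE 𝒜 w D) :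
    a - weightedComponent 𝒜 w D a ∈ weightedDegreeLE 𝒜 w (D - 1) := by
  intro i p hp
  rw [Finsupp.sub_apply, decompose_sub, DirectSum.sub_apply, AddSubgroupClass.coe_sub,
    weightedComponent_apply]
  rcases eq_or_ne p (D - w i) with rfl | hne
  · rw [decompose_coe, of_eq_same, sub_self]
  · rw [decompose_of_mem_ne 𝒜 (SetLike.coe_mem _) hne.symm, ha i p (by omega), sub_zero]

lemma single_mem_weightedDegreeLE {i : ι} {r : A} {e : ℤ} (hr : r ∈ 𝒜 e) (h : e + w i ≤ D) :
    Finsupp.single i r ∈ weightedDegreeLE 𝒜 w D := by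
  intro j p hp
  rcases eq_or_ne i j with rfl | hne
  · rw [Finsupp.single_eq_same]
    exact decompose_of_mem_ne 𝒜 hr (by omega)
  · simp [Finsupp.single_eq_of_ne hne.symm]

lemma exists_homogeneous_linearCombination_eq {C : Set (ι →₀ A)} {d : (ι →₀ A) → ℤ}
    (hd : ∀ t ∈ C, ∀ i, t i ∈ 𝒜 (d t - w i)) {c : ι →₀ A} (hc : c ∈ Submodule.span A C)
    (hcD : ∀ i, c i ∈ 𝒜 (D - w i)) :
    ∃ g ∈ Finsupp.supported A A C, (∀ t, g t ∈ 𝒜 (D - d t)) ∧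
      Finsupp.linearCombination A id g = c := by
  rw [← Set.image_id C, Finsupp.mem_span_image_iff_linearCombination] at hc
  obtain ⟨f, hfC, rfl⟩ := hc
  set g := weightedComponent 𝒜 d D f
  refine ⟨g, weightedComponent_mem_supported hfC, weightedComponent_mem, Finsupp.ext fun i => ?_⟩
  have hcoeff : ∀ l : (ι →₀ A) →₀ A,
      Finsupp.linearCombination A id l i = l.sum fun t r => r * t i :=
    fun l => by simp [Finsupp.linearCombination_apply, Finsupp.sum_apply]
  conv_rhs => rw [← decompose_of_mem_same 𝒜 (hcD i)]
  rw [hcoeff, hcoeff, Finsupp.sum_of_support_subset g support_weightedComponent_subset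
      (fun t r => r * t i) (fun t _ => zero_mul _), Finsupp.sum,
    decompose_sum, DFinsupp.finsetSum_apply, AddSubmonoidClass.coe_finsetSum]
  refine Finset.sum_congr rfl fun t ht => ?_
  rw [decompose_mul_of_mem_right (hd t (hfC ht) i), weightedComponent_apply,
    sub_sub_sub_cancel_right]

end WeightedDegree

section Syzygy

variable {A : Type*} [CommRing A] {𝒜 : ℤ → AddSubgroup A} [GradedRing 𝒜]
variable {M : Type*} [AddCommGroup M] [Module A M] {ℳ : ℤ → AddSubgroup M}
  [DirectSum.Decomposition ℳ] [SetLike.GradedSMul 𝒜 ℳ]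

lemma decompose_linearCombination_id {D : ℤ} {a : M →₀ A}
    (ha : a ∈ weightedDegreeLE 𝒜 (mdeg ℳ) D) {n : ℤ} (hn : D ≤ n) :
    (decompose ℳ (Finsupp.linearCombination A id a) n : M) =
      Finsupp.linearCombination A (ini ℳ) (weightedComponent 𝒜 (mdeg ℳ) n a) := by
  rw [Finsupp.linearCombination_apply, Finsupp.sum, decompose_sum, DFinsupp.finsetSum_apply,
    AddSubmonoidClass.coe_finsetSum, Finsupp.linearCombination_apply,
    Finsupp.sum_of_support_subset _ support_weightedComponent_subset (fun m r => r • ini ℳ m)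
      (fun m _ => zero_smul A _)]
  refine Finset.sum_congr rfl fun m _ => ?_
  exact decompose_smul_eq_smul_ini (e := D - mdeg ℳ m) (fun p hp => ha m p (by omega)) m
    (by omega)

/-- The degree-`d` component of `∑ tₘ • m` is `∑ tₘ • ini m = 0`. -/
lemma mdeg_linearCombination_id_lt {t : M →₀ A} {d : ℤ} (ht : ∀ m, t m ∈ 𝒜 (d - mdeg ℳ m))
    (hker : Finsupp.linearCombination A (ini ℳ) t = 0)
    (hz : Finsupp.linearCombination A id t ≠ 0) :
    mdeg ℳ (Finsupp.linearCombination A id t) < d := by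
  have htd := mem_weightedDegreeLE_of_forall_mem ht
  suffices mdeg ℳ (Finsupp.linearCombination A id t) ≤ d - 1 by omega
  refine mdeg_le_of_forall hz fun p hp => ?_
  rw [decompose_linearCombination_id htd (by omega)]
  rcases (show d ≤ p by omega).eq_or_lt with rfl | hdp
  · rwa [weightedComponent_eq_self ht]
  · rw [weightedComponent_eq_zero_of_lt htd hdp, map_zero]

lemma exists_mem_supported_zElems_linearCombination_eq {X : Set M} {C : Set (M →₀ A)}
    (hC : IsHomogSyzygyGensSet 𝒜 ℳ X C) {D : ℤ} {c : M →₀ A}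
    (hcX : c ∈ Finsupp.supported A A X) (hc : Finsupp.linearCombination A (ini ℳ) c = 0)
    (hcD : ∀ m, c m ∈ 𝒜 (D - mdeg ℳ m)) :
    ∃ b ∈ Finsupp.supported A A (zElems C), b ∈ weightedDegreeLE 𝒜 (mdeg ℳ) (D - 1) ∧
      Finsupp.linearCombination A id b = Finsupp.linearCombination A id c := by
  classical
  obtain ⟨-, hChom, hCspan⟩ := hC
  choose! d hd using hChom
  have hker : ∀ t ∈ C, Finsupp.linearCombination A (ini ℳ) t = 0 := fun t ht =>
    (show t ∈ Finsupp.supported A A X ⊓ LinearMap.ker _ from hCspan ▸ Submodule.subset_span ht).2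
  obtain ⟨g, hgC, hg, rfl⟩ :=
    exists_homogeneous_linearCombination_eq hd (hCspan ▸ ⟨hcX, hc⟩) hcD
  set z : (M →₀ A) → M := fun t => Finsupp.linearCombination A id t
  have hgC' : ∀ t ∈ g.support, t ∈ C := fun t ht => (Finsupp.mem_supported A g).1 hgC ht
  refine ⟨∑ t ∈ g.support with z t ≠ 0, Finsupp.single (z t) (g t),
    Submodule.sum_mem _ fun t ht => Finsupp.single_mem_supported A _ ⟨t, hgC' t ?_, rfl⟩,
    AddSubgroup.sum_mem _ fun t ht => single_mem_weightedDegreeLE (hg t) ?_, ?_⟩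
  · exact (Finset.mem_filter.1 ht).1
  · obtain ⟨htg, hzt⟩ := Finset.mem_filter.1 ht
    have : mdeg ℳ (z t) < d t :=
      mdeg_linearCombination_id_lt (hd t (hgC' t htg)) (hker t (hgC' t htg)) hzt
    omega
  · rw [map_sum, Finsupp.linearCombination_linearCombination, Finsupp.linearCombination_apply,
      Finsupp.sum]
    simp only [Finsupp.linearCombination_single, id]
    exact Finset.sum_filter_of_ne fun t _ h hz => h (by rw [hz, smul_zero])

end Syzygy

section Buchberger

variable {A : Type*} [CommRing A] (𝒜 : ℤ → AddSubgroup A) [GradedRing 𝒜]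
variable {M : Type*} [AddCommGroup M] [Module A M] (ℳ : ℤ → AddSubgroup M)
  [DirectSum.Decomposition ℳ]

/-- `y = ∑ aₘ • m` with `m ∈ s` and `deg aₘ + deg m ≤ D`; a reduced expression is the case
`D = deg y`. -/
def HasExprDegLE (s : Set M) (y : M) (D : ℤ) : Prop :=
  ∃ a ∈ Finsupp.supported A A s, a ∈ weightedDegreeLE 𝒜 (mdeg ℳ) D ∧
    Finsupp.linearCombination A id a = y

variable {𝒜 ℳ} {X : Set M} {y : M} {D : ℤ}

lemma hasExprDegLE_iff :
    HasExprDegLE 𝒜 ℳ X y D ↔ ∃ a : M →₀ A, ↑a.support ⊆ X ∧ y = a.sum (fun m c => c • m) ∧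
      ∀ m ∈ a.support, mdeg 𝒜 (a m) + mdeg ℳ m ≤ D := by
  simp only [HasExprDegLE, Finsupp.mem_supported, mem_weightedDegreeLE_iff,
    Finsupp.linearCombination_apply, id, eq_comm (b := y)]
  tauto

lemma zElems_subset {C : Set (M →₀ A)} (hC : ∀ c ∈ C, ↑c.support ⊆ X) {N : Submodule A M}
    (hX : X ⊆ N) : zElems C ⊆ N := by
  rintro _ ⟨t, ht, rfl⟩
  refine Submodule.span_le.2 hX ?_
  rw [← Set.image_id X]
  exact (Finsupp.mem_span_image_iff_linearCombination A).2
    ⟨t, (Finsupp.mem_supported A t).2 (hC t ht), rfl⟩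

omit [GradedRing 𝒜] in
lemma BuchbergerStep.subset {Y : Set M} (h : BuchbergerStep 𝒜 ℳ X Y) {N : Submodule A M}
    (hX : X ⊆ N) : Y ⊆ N := by
  obtain ⟨C, hC, rfl⟩ := h
  exact Set.union_subset hX (zElems_subset hC.1 hX)

variable [SetLike.GradedSMul 𝒜 ℳ]

lemma HasExprDegLE.union_zElems {C : Set (M →₀ A)} (hC : IsHomogSyzygyGensSet 𝒜 ℳ X C)
    (h : HasExprDegLE 𝒜 ℳ X y D) (hy : mdeg ℳ y < D) :
    HasExprDegLE 𝒜 ℳ (X ∪ zElems C) y (D - 1) := by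
  obtain ⟨a, haX, haD, rfl⟩ := h
  set c := weightedComponent 𝒜 (mdeg ℳ) D a
  have hc : Finsupp.linearCombination A (ini ℳ) c = 0 := by
    rw [← decompose_linearCombination_id haD le_rfl, decompose_eq_zero_of_mdeg_lt hy]
  obtain ⟨b, hbZ, hbD, hb⟩ := exists_mem_supported_zElems_linearCombination_eq hC
    (weightedComponent_mem_supported haX) hc weightedComponent_mem
  refine ⟨a - c + b, add_mem (sub_mem ?_ ?_) ?_, add_mem (sub_weightedComponent_mem haD) hbD, ?_⟩
  · exact Finsupp.supported_mono Set.subset_union_left haX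
  · exact Finsupp.supported_mono Set.subset_union_left (weightedComponent_mem_supported haX)
  · exact Finsupp.supported_mono Set.subset_union_right hbZ
  · rw [map_add, map_sub, hb, sub_add_cancel]

lemma hasExprDegLE_of_buchbergerStep {N : Submodule A M} {X : ℕ → Set M} {δ : ℕ}
    (hstep : ∀ k, BuchbergerStep 𝒜 ℳ (X k) (X (k + 1)))
    (h0 : ∀ y ∈ N, HasExprDegLE 𝒜 ℳ (X 0) y (mdeg ℳ y + δ)) :
    ∀ k ≤ δ, ∀ y ∈ N, HasExprDegLE 𝒜 ℳ (X k) y (mdeg ℳ y + (δ - k)) := by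
  intro k
  induction k with
  | zero => simpa using h0
  | succ k ih =>
    intro hk y hy
    obtain ⟨C, hC, hXk⟩ := hstep k
    rw [hXk]
    convert (ih (by omega) y hy).union_zElems hC (by omega) using 1
    push_cast
    ring

lemma isGrobnerBasisSet_of_forall_hasExprDegLE {N : Submodule A M} (hXN : X ⊆ N)
    (h : ∀ y ∈ N, HasExprDegLE 𝒜 ℳ X y (mdeg ℳ y)) : IsGrobnerBasisSet ℳ N X := by
  refine ⟨hXN, le_antisymm (Submodule.span_le.2 ?_) (Submodule.span_le.2 ?_)⟩
  · rintro _ ⟨m, hm, rfl⟩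
    rcases eq_or_ne m 0 with rfl | hm0
    · rw [ini_zero]
      exact zero_mem _
    · exact Submodule.subset_span ⟨m, hXN hm, hm0, rfl⟩
  · rintro _ ⟨y, hy, -, rfl⟩
    obtain ⟨a, haX, haD, rfl⟩ := h y hy
    rw [ini, decompose_linearCombination_id haD le_rfl]
    exact (Finsupp.mem_span_image_iff_linearCombination A).2
      ⟨_, weightedComponent_mem_supported haX, rfl⟩

end Buchberger

theorem stmt_3_general {A M : Type*} [CommRing A] (𝒜 : ℤ → AddSubgroup A) [GradedRing 𝒜]
    [AddCommGroup M] [Module A M] (ℳ : ℤ → AddSubgroup M) [DirectSum.Decomposition ℳ]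
    [SetLike.GradedSMul 𝒜 ℳ]
    (N : Submodule A M) (X₀ : Set M) (hX₀ : X₀ ⊆ (N : Set M))
    (δ : ℕ)
    (hδ : ∀ y ∈ N, ∃ a : M →₀ A, ↑a.support ⊆ X₀ ∧ y = a.sum (fun m c => c • m) ∧
      ∀ m ∈ a.support, mdeg 𝒜 (a m) + mdeg ℳ m ≤ mdeg ℳ y + δ)
    (X : ℕ → Set M) (hX0 : X 0 = X₀)
    (hstep : ∀ k, BuchbergerStep 𝒜 ℳ (X k) (X (k + 1))) :
    ∃ k ≤ δ, IsGrobnerBasisSet ℳ N (X k) ∧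
      ∀ C : Set (M →₀ A), IsHomogSyzygyGensSet 𝒜 ℳ (X k) C →
        ∀ z ∈ zElems C, HasReducedExprSet 𝒜 ℳ (X k) z := by
  subst hX0
  have hXN : ∀ k, X k ⊆ N := fun k => by
    induction k with
    | zero => exact hX₀
    | succ k ih => exact (hstep k).subset ih
  have hred : ∀ y ∈ N, HasExprDegLE 𝒜 ℳ (X δ) y (mdeg ℳ y) := fun y hy => by
    simpa using hasExprDegLE_of_buchbergerStep hstep
      (fun y hy => hasExprDegLE_iff.2 (hδ y hy)) δ le_rfl y hy
  refine ⟨δ, le_rfl, isGrobnerBasisSet_of_forall_hasExprDegLE (hXN δ) hred, fun C hC z hz => ?_⟩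
  exact hasExprDegLE_iff.1 (hred z (zElems_subset hC.1 (hXN δ) hz))

/-- If every element of `N` can be expressed in terms of the generators `X₀` with degree
defect at most `δ`, then Buchberger's algorithm terminates after at most `δ` steps,
producing a Gröbner basis of `N`. -/
theorem stmt_3 {A M : Type*} [CommRing A] (𝒜 : ℤ → AddSubgroup A) [GradedRing 𝒜]
    [AddCommGroup M] [Module A M] (ℳ : ℤ → AddSubgroup M) [DirectSum.Decomposition ℳ]
    [SetLike.GradedSMul 𝒜 ℳ]
    (hA : RingNonnegGraded 𝒜) (hM : ModuleBddBelow ℳ)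
    (N : Submodule A M) (X₀ : Set M) (hX₀ : X₀ ⊆ (N : Set M))
    (hgen : Submodule.span A X₀ = N) (δ : ℕ)
    (hδ : ∀ y ∈ N, ∃ a : M →₀ A, ↑a.support ⊆ X₀ ∧ y = a.sum (fun m c => c • m) ∧
      ∀ m ∈ a.support, mdeg 𝒜 (a m) + mdeg ℳ m ≤ mdeg ℳ y + δ)
    (X : ℕ → Set M) (hX0 : X 0 = X₀)
    (hstep : ∀ k, BuchbergerStep 𝒜 ℳ (X k) (X (k + 1))) :
    ∃ k ≤ δ, IsGrobnerBasisSet ℳ N (X k) ∧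
      ∀ C : Set (M →₀ A), IsHomogSyzygyGensSet 𝒜 ℳ (X k) C →
        ∀ z ∈ zElems C, HasReducedExprSet 𝒜 ℳ (X k) z :=
  stmt_3_general 𝒜 ℳ N X₀ hX₀ δ hδ X hX0 hstep
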